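/- arXiv:2411.06312 — 4 statements merged into one kernel-verified Lean document; each statement's English description precedes it below -/
import Mathlib

section
/- Let μ ≥ 0 and σ > 0. Define R(μ, σ²) := sup_{p∈R} p(1 − Φ((p−μ)/σ)) (the optimal posted-price revenue when the buyer's value is N(μ, σ²)). Then R(μ, σ²) ≤ max{ μ − σ·sqrt(2|ln(μ/(σ√(2π)(1+γ)))|), (μ + σ)/2 }, where γ = sup_x φ(x)x. -/
open MeasureTheory

/-- The standard normal density. -/
noncomputable def stdPDF (x : ℝ) : ℝ := (Real.sqrt (2 * Real.pi))⁻¹ * Real.exp (-x ^ 2 / 2)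

/-- The standard normal cumulative distribution function. -/
noncomputable def Phi (x : ℝ) : ℝ := ∫ t in Set.Iic x, stdPDF t

open Real Set

lemma sqrt2pi_pos : 0 < Real.sqrt (2 * Real.pi) := Real.sqrt_pos.2 (by positivity)

lemma stdPDF_pos (x : ℝ) : 0 < stdPDF x := by
  unfold stdPDF; positivity

lemma stdPDF_nonneg (x : ℝ) : 0 ≤ stdPDF x := (stdPDF_pos x).le

lemma continuous_stdPDF : Continuous stdPDF := by
  unfold stdPDF; continuity

lemma stdPDF_anti {a b : ℝ} (ha : 0 ≤ a) (hab : a ≤ b) : stdPDF b ≤ stdPDF a := by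
  unfold stdPDF
  have h : Real.exp (-b ^ 2 / 2) ≤ Real.exp (-a ^ 2 / 2) := Real.exp_le_exp.2 (by nlinarith)
  have h0 : (0:ℝ) ≤ (Real.sqrt (2 * Real.pi))⁻¹ := by positivity
  exact mul_le_mul_of_nonneg_left h h0

lemma stdPDF_le (x : ℝ) : stdPDF x ≤ (Real.sqrt (2 * Real.pi))⁻¹ := by
  have : Real.exp (-x ^ 2 / 2) ≤ 1 := Real.exp_le_one_iff.2 (by nlinarith [sq_nonneg x])
  calc stdPDF x ≤ (Real.sqrt (2 * Real.pi))⁻¹ * 1 := by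
        unfold stdPDF; gcongr
    _ = _ := mul_one _

lemma integrable_stdPDF : Integrable stdPDF := by
  have h := (integrable_exp_neg_mul_sq (by norm_num : (0:ℝ) < 1/2)).const_mul
    (Real.sqrt (2 * Real.pi))⁻¹
  convert h using 2 with x
  unfold stdPDF; ring_nf

lemma integral_stdPDF : ∫ x, stdPDF x = 1 := by
  have h : ∫ x : ℝ, Real.exp (-(1/2) * x ^ 2) = Real.sqrt (Real.pi / (1/2)) :=
    integral_gaussian (1/2)
  have h2 : ∫ x, stdPDF x = (Real.sqrt (2 * Real.pi))⁻¹ * ∫ x : ℝ, Real.exp (-(1/2) * x ^ 2) := by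
    rw [← integral_const_mul]
    congr 1 with x
    unfold stdPDF; ring_nf
  rw [h2, h]
  rw [show Real.pi / (1/2) = 2 * Real.pi by ring]
  exact inv_mul_cancel₀ (ne_of_gt sqrt2pi_pos)

lemma Phi_nonneg (x : ℝ) : 0 ≤ Phi x :=
  setIntegral_nonneg measurableSet_Iic fun t _ => stdPDF_nonneg t

lemma Phi_mono {a b : ℝ} (hab : a ≤ b) : Phi a ≤ Phi b := by
  apply setIntegral_mono_set integrable_stdPDF.integrableOn
    (Filter.Eventually.of_forall fun t => stdPDF_nonneg t)
  exact Filter.Eventually.of_forall (Iic_subset_Iic.2 hab)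

lemma one_sub_Phi (x : ℝ) : 1 - Phi x = ∫ t in Set.Ioi x, stdPDF t := by
  have h := intervalIntegral.integral_Iic_add_Ioi (b := x)
    (integrable_stdPDF.integrableOn) (integrable_stdPDF.integrableOn)
  rw [integral_stdPDF] at h
  unfold Phi
  linarith

lemma Phi_le_one (x : ℝ) : Phi x ≤ 1 := by
  have h := one_sub_Phi x
  have : 0 ≤ ∫ t in Set.Ioi x, stdPDF t :=
    setIntegral_nonneg measurableSet_Ioi fun t _ => stdPDF_nonneg t
  linarith

lemma Phi_neg (x : ℝ) : Phi (-x) = 1 - Phi x := by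
  have heven : ∀ t : ℝ, stdPDF (-t) = stdPDF t := fun t => by unfold stdPDF; ring_nf
  have h2 : (∫ t in Set.Iic (-x), stdPDF (-t)) = ∫ t in Set.Ioi x, stdPDF t := by
    rw [integral_comp_neg_Iic, neg_neg]
  have h3 : (∫ t in Set.Iic (-x), stdPDF (-t)) = Phi (-x) := by
    unfold Phi
    exact setIntegral_congr_fun measurableSet_Iic fun t _ => heven t
  rw [← h3, h2, ← one_sub_Phi]

lemma Phi_zero : Phi 0 = 1/2 := by
  have h := Phi_neg 0
  rw [neg_zero] at h
  linarith

lemma Phi_sub {a b : ℝ} : Phi b - Phi a = ∫ t in a..b, stdPDF t :=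
  intervalIntegral.integral_Iic_sub_Iic integrable_stdPDF.integrableOn
    integrable_stdPDF.integrableOn

lemma Phi_upper {y : ℝ} (hy : 0 ≤ y) : Phi y ≤ 1/2 + y * (Real.sqrt (2 * Real.pi))⁻¹ := by
  have h : Phi y - Phi 0 = ∫ t in (0:ℝ)..y, stdPDF t := Phi_sub
  have hle : (∫ t in (0:ℝ)..y, stdPDF t) ≤ ∫ _t in (0:ℝ)..y, (Real.sqrt (2 * Real.pi))⁻¹ := by
    apply intervalIntegral.integral_mono_on hy
      (continuous_stdPDF.intervalIntegrable _ _) (intervalIntegrable_const)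
    exact fun t _ => stdPDF_le t
  rw [intervalIntegral.integral_const, smul_eq_mul, mul_comm] at hle
  rw [Phi_zero] at h
  linarith

lemma integrableOn_mul_stdPDF {x : ℝ} (hx : 0 < x) :
    IntegrableOn (fun t => t * stdPDF t) (Set.Ioi x) := by
  have h1 : IntegrableOn (fun t : ℝ => t ^ (1:ℝ) * Real.exp (-(1/2) * t ^ 2)) (Set.Ioi 0) :=
    integrableOn_rpow_mul_exp_neg_mul_sq (by norm_num) (by norm_num)
  have h2 : IntegrableOn (fun t : ℝ => t ^ (1:ℝ) * Real.exp (-(1/2) * t ^ 2)) (Set.Ioi x) :=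
    h1.mono_set (Set.Ioi_subset_Ioi hx.le)
  have h3 := (h2.const_mul (Real.sqrt (2 * Real.pi))⁻¹)
  apply (integrableOn_congr_fun _ measurableSet_Ioi).2 h3
  intro t ht
  have ht0 : (0:ℝ) < t := lt_trans hx ht
  show t * stdPDF t = (Real.sqrt (2 * Real.pi))⁻¹ * (t ^ (1:ℝ) * Real.exp (-(1/2) * t ^ 2))
  rw [Real.rpow_one]
  unfold stdPDF; ring_nf

lemma integral_mul_stdPDF_Ioi {x : ℝ} (hx : 0 < x) :
    ∫ t in Set.Ioi x, t * stdPDF t = stdPDF x := by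
  have hderiv : ∀ t ∈ Set.Ioi x, HasDerivAt (fun u => -stdPDF u) (t * stdPDF t) t := by
    intro t _
    have h : HasDerivAt (fun u : ℝ => -u ^ 2 / 2) (-t) t := by
      have h2 := ((hasDerivAt_pow 2 t).div_const 2).neg
      have hf : (fun u : ℝ => -u ^ 2 / 2) = -fun x => x ^ 2 / 2 := by
        funext u; simp only [Pi.neg_apply]; ring
      rw [hf]; refine h2.congr_deriv ?_; norm_num
    have h2 := (h.exp.const_mul (Real.sqrt (2 * Real.pi))⁻¹).neg
    have he : (fun u => -stdPDF u) = fun u => -((Real.sqrt (2 * Real.pi))⁻¹ * Real.exp (-u ^ 2 / 2)) := by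
      funext u; unfold stdPDF; ring
    rw [he]
    refine h2.congr_deriv ?_
    unfold stdPDF; ring
  have hint : IntegrableOn (fun t => t * stdPDF t) (Set.Ioi x) := integrableOn_mul_stdPDF hx
  have htend : Filter.Tendsto (fun u => -stdPDF u) Filter.atTop (nhds 0) := by
    rw [← neg_zero]
    apply Filter.Tendsto.neg
    unfold stdPDF
    rw [show (0:ℝ) = (Real.sqrt (2 * Real.pi))⁻¹ * 0 by ring]
    apply Filter.Tendsto.const_mul
    apply Real.tendsto_exp_atBot.comp
    apply Filter.Tendsto.atBot_div_const (by norm_num : (0:ℝ) < 2)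
    apply Filter.tendsto_neg_atBot_iff.mpr
    exact Filter.tendsto_pow_atTop (by norm_num)
  have := MeasureTheory.integral_Ioi_of_hasDerivAt_of_tendsto
    (Continuous.continuousWithinAt (continuous_stdPDF.neg)) hderiv hint htend
  rw [this]; simp

lemma tail_le {x : ℝ} (hx : 0 < x) : x * (1 - Phi x) ≤ stdPDF x := by
  rw [one_sub_Phi]
  have hmono : (∫ t in Set.Ioi x, x * stdPDF t) ≤ ∫ t in Set.Ioi x, t * stdPDF t := by
    apply setIntegral_mono_on (integrable_stdPDF.integrableOn.const_mul x)
      (integrableOn_mul_stdPDF hx) measurableSet_Ioi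
    intro t ht
    exact mul_le_mul_of_nonneg_right (le_of_lt ht) (stdPDF_nonneg t)
  rw [integral_const_mul] at hmono
  rw [integral_mul_stdPDF_Ioi hx] at hmono
  exact hmono

lemma gamma_pt (x : ℝ) : stdPDF x * x ≤ (Real.sqrt (2 * Real.pi))⁻¹ * Real.exp (-(1/2)) := by
  rcases le_or_gt x 0 with h | h
  · have h1 : stdPDF x * x ≤ 0 := mul_nonpos_of_nonneg_of_nonpos (stdPDF_nonneg x) h
    have h2 : (0:ℝ) ≤ (Real.sqrt (2 * Real.pi))⁻¹ * Real.exp (-(1/2)) := by positivity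
    linarith
  · have hlog : Real.log x ≤ x - 1 := Real.log_le_sub_one_of_pos h
    have hkey : x * Real.exp (-x ^ 2 / 2) ≤ Real.exp (-(1/2)) := by
      have h1 : x = Real.exp (Real.log x) := (Real.exp_log h).symm
      calc x * Real.exp (-x ^ 2 / 2) = Real.exp (Real.log x + (-x ^ 2 / 2)) := by
            rw [Real.exp_add, ← h1]
        _ ≤ Real.exp (-(1/2)) := by
            apply Real.exp_le_exp.2
            nlinarith [sq_nonneg (x - 1)]
    unfold stdPDF
    calc (Real.sqrt (2 * Real.pi))⁻¹ * Real.exp (-x ^ 2 / 2) * x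
        = (Real.sqrt (2 * Real.pi))⁻¹ * (x * Real.exp (-x ^ 2 / 2)) := by ring
      _ ≤ (Real.sqrt (2 * Real.pi))⁻¹ * Real.exp (-(1/2)) := by
          apply mul_le_mul_of_nonneg_left hkey (by positivity)

lemma gamma_bdd : BddAbove (Set.range fun x => stdPDF x * x) :=
  ⟨(Real.sqrt (2 * Real.pi))⁻¹ * Real.exp (-(1/2)), by
    rintro _ ⟨x, rfl⟩; exact gamma_pt x⟩

lemma gamma_ge (x : ℝ) : stdPDF x * x ≤ ⨆ y : ℝ, stdPDF y * y :=
  le_ciSup gamma_bdd x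

lemma gamma_nonneg : 0 ≤ ⨆ y : ℝ, stdPDF y * y := by
  have := gamma_ge 0
  simpa using this

lemma gamma_le : (⨆ y : ℝ, stdPDF y * y) ≤ (Real.sqrt (2 * Real.pi))⁻¹ * Real.exp (-(1/2)) :=
  ciSup_le gamma_pt


lemma aux_E61 {E : ℝ} (hE0 : 0 < E) (hE2 : E ^ 2 ≤ 0.37) : E ≤ 0.61 := by
  nlinarith [sq_nonneg (E - 0.61)]

lemma aux_quad {s E y : ℝ} (hs_lb : 2.5 ≤ s) (hs_ub : s ≤ 2.6) (hsE : s * E ≤ 1.586)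
    (hE2 : E ^ 2 ≤ 0.37) : y * (s/2 + E) - y^2 ≤ s/2 := by
  nlinarith [sq_nonneg (2*y - (s/2 + E))]

lemma aux_key {μ σ s E g y : ℝ} (hσ : 0 < σ) (hy : 0 < y) (hs_lb : 2.5 ≤ s) (hs_ub : s ≤ 2.6)
    (hE0 : 0 < E) (hE2 : E ^ 2 ≤ 0.37) (hgE : g * s ≤ E) (hcase : μ ≤ σ * (s * (1 + g))) :
    (μ - σ*y) * (s/2 + y) ≤ s * (μ + σ)/2 := by
  have hE61 : E ≤ 0.61 := aux_E61 hE0 hE2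
  have hsE : s * E ≤ 1.586 := by
    calc s * E ≤ 2.6 * 0.61 := mul_le_mul hs_ub hE61 hE0.le (by norm_num)
      _ = 1.586 := by norm_num
  have hμse : μ ≤ σ * s + σ * E := by
    nlinarith [mul_le_mul_of_nonneg_left hgE hσ.le]
  have hq : y * (s/2 + E) - y^2 ≤ s/2 := aux_quad hs_lb hs_ub hsE hE2
  nlinarith [mul_le_mul_of_nonneg_right hμse hy.le, mul_le_mul_of_nonneg_left hq hσ.le]

lemma aux_int {μ σ g y t pdft : ℝ} (hσ : 0 < σ) (hty : y ≤ t) (hpdf0 : 0 ≤ pdft)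
    (h5 : σ * (1 + g) ≤ μ * pdft) (h6 : pdft * t ≤ g) : σ ≤ (μ - σ*y) * pdft := by
  nlinarith [mul_nonneg (mul_nonneg hσ.le (sub_nonneg.2 hty)) hpdf0,
    mul_le_mul_of_nonneg_left h6 hσ.le]

lemma aux_logA {s g A : ℝ} (hs_lb : 2.5 ≤ s) (hg0 : 0 ≤ g) (hA1 : 1 < A)
    (hlog : Real.log A ≤ A - 1) : 2 * Real.log A ≤ (s * (1 + g) * A)^2 := by
  have h1 : 2 * Real.log A ≤ A^2 := by nlinarith [sq_nonneg (A - 1)]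
  have h3 : 2.5 ≤ s * (1 + g) := by nlinarith
  have h2 : (1:ℝ) ≤ (s * (1 + g))^2 := by nlinarith [sq_nonneg (s * (1 + g) - 2.5)]
  nlinarith [mul_le_mul_of_nonneg_right h2 (sq_nonneg A)]

set_option maxHeartbeats 1000000 in
theorem stmt5 (μ σ : ℝ) (hμ : 0 ≤ μ) (hσ : 0 < σ) :
    (⨆ p : ℝ, p * (1 - Phi ((p - μ) / σ)))
      ≤ max
          (μ - σ * Real.sqrt (2 * |Real.log (μ /
            (σ * Real.sqrt (2 * Real.pi) * (1 + ⨆ x : ℝ, stdPDF x * x)))|))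
          ((μ + σ) / 2) := by
  have hs0 := sqrt2pi_pos
  set s : ℝ := Real.sqrt (2 * Real.pi) with hs_def
  have hs2 : s ^ 2 = 2 * Real.pi := Real.sq_sqrt (by positivity)
  have hs_lb : 2.5 ≤ s := by nlinarith [Real.pi_gt_d6]
  have hs_ub : s ≤ 2.6 := by nlinarith [Real.pi_lt_d2]
  set g : ℝ := ⨆ x : ℝ, stdPDF x * x with hg_def
  have hg0 : 0 ≤ g := gamma_nonneg
  set E : ℝ := Real.exp (-(1/2)) with hE_def
  have hE0 : (0:ℝ) < E := Real.exp_pos _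
  have hgE : g * s ≤ E := by
    have h := gamma_le
    calc g * s ≤ (s⁻¹ * E) * s := mul_le_mul_of_nonneg_right h hs0.le
      _ = E := by field_simp
  have hE2 : E ^ 2 ≤ 0.37 := by
    have h1 : E ^ 2 = Real.exp (-1) := by
      rw [hE_def, sq, ← Real.exp_add]; norm_num
    have h2 : Real.exp (-1) = (Real.exp 1)⁻¹ := by rw [Real.exp_neg]
    have h3 := Real.exp_one_gt_d9
    rw [h1, h2]
    rw [inv_le_iff_one_le_mul₀ (Real.exp_pos 1)]
    nlinarith
  apply ciSup_le
  intro p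
  have hB2pos : (0:ℝ) < (μ + σ)/2 := by linarith
  set x : ℝ := (p - μ)/σ with hxdef
  have hpx : p = μ + σ * x := by rw [hxdef]; field_simp; ring
  rcases le_or_gt 0 x with hx | hx
  · refine le_trans ?_ (le_max_right _ _)
    have h1 : 1 - Phi x ≤ 1/2 := by
      have := Phi_mono hx
      rw [Phi_zero] at this
      linarith
    have h2 : 0 ≤ 1 - Phi x := by linarith [Phi_le_one x]
    have h3 : x * (1 - Phi x) ≤ 1/2 := by
      rcases eq_or_lt_of_le hx with h | h
      · rw [← h]; norm_num
      · calc x * (1 - Phi x) ≤ stdPDF x := tail_le h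
          _ ≤ s⁻¹ := stdPDF_le x
          _ ≤ 1/2 := by
              rw [inv_le_comm₀ hs0 (by norm_num)]
              linarith
    calc p * (1 - Phi x) = μ * (1 - Phi x) + σ * (x * (1 - Phi x)) := by rw [hpx]; ring
      _ ≤ μ * (1/2) + σ * (1/2) := by
          exact add_le_add (mul_le_mul_of_nonneg_left h1 hμ)
            (mul_le_mul_of_nonneg_left h3 hσ.le)
      _ = (μ + σ)/2 := by ring
  · set y : ℝ := -x with hy_def
    have hy0 : 0 < y := by simp [hy_def]; linarith
    have hxy : x = -y := by rw [hy_def]; ring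
    have hPhix : 1 - Phi x = Phi y := by rw [hxy, Phi_neg]; ring
    have hpy : p = μ - σ * y := by rw [hpx, hxy]; ring
    rw [hPhix]
    rcases le_or_gt p 0 with hp0 | hp0
    · refine le_trans ?_ (le_max_right _ _)
      have := mul_nonpos_of_nonpos_of_nonneg hp0 (Phi_nonneg y)
      linarith
    · have hμy : σ * y < μ := by rw [hpy] at hp0; linarith
      rcases le_or_gt μ (σ * (s * (1 + g))) with hcase | hcase
      · -- small μ : second branch
        refine le_trans ?_ (le_max_right _ _)
        have hPhiu := Phi_upper hy0.le
        have step1 : p * Phi y ≤ p * (1/2 + y * s⁻¹) :=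
          mul_le_mul_of_nonneg_left hPhiu hp0.le
        have key : (μ - σ*y) * (s/2 + y) ≤ s * (μ + σ)/2 :=
          aux_key hσ hy0 hs_lb hs_ub hE0 hE2 hgE hcase
        have hhalf : 1/2 + y * s⁻¹ = s⁻¹ * (s/2 + y) := by
          field_simp
        have step2 : p * (1/2 + y * s⁻¹) ≤ (μ + σ)/2 := by
          rw [hpy, hhalf,
            show (μ - σ*y) * (s⁻¹ * (s/2 + y)) = s⁻¹ * ((μ - σ*y) * (s/2 + y)) from by ring]
          calc s⁻¹ * ((μ - σ*y) * (s/2 + y)) ≤ s⁻¹ * (s * (μ + σ)/2) :=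
                mul_le_mul_of_nonneg_left key (by positivity)
            _ = (μ + σ)/2 := by field_simp
        linarith
      · -- large μ : first branch
        have hc1 : (1:ℝ) ≤ 1 + g := by linarith
        set A : ℝ := μ / (σ * s * (1 + g)) with hA_def
        have hden : (0:ℝ) < σ * s * (1 + g) := by positivity
        have hA1 : 1 < A := by
          rw [hA_def, lt_div_iff₀ hden]
          ring_nf
          ring_nf at hcase
          linarith
        have hA0 : (0:ℝ) < A := by linarith
        have hlogpos : 0 ≤ Real.log A := Real.log_nonneg hA1.le
        have habs : |Real.log A| = Real.log A := abs_of_nonneg hlogpos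
        set X : ℝ := Real.sqrt (2 * Real.log A) with hX_def
        have hXsq : X^2 = 2 * Real.log A := Real.sq_sqrt (by linarith)
        have hX0 : 0 ≤ X := Real.sqrt_nonneg _
        have hμA : μ = σ * s * (1 + g) * A := by
          rw [hA_def]; field_simp
        have hXμ : σ * X ≤ μ := by
          have h1 : Real.log A ≤ A - 1 := Real.log_le_sub_one_of_pos hA0
          have h2 : 2 * Real.log A ≤ (μ/σ)^2 := by
            have hμσ : μ/σ = s * (1 + g) * A := by rw [hμA]; field_simp
            rw [hμσ]
            exact aux_logA hs_lb hg0 hA1 h1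
          have h3 : X ≤ μ/σ := by
            rw [hX_def]
            calc Real.sqrt (2 * Real.log A) ≤ Real.sqrt ((μ/σ)^2) := Real.sqrt_le_sqrt h2
              _ = μ/σ := Real.sqrt_sq (by positivity)
          calc σ * X ≤ σ * (μ/σ) := mul_le_mul_of_nonneg_left h3 hσ.le
            _ = μ := by field_simp
        have hpdfX : stdPDF X = s⁻¹ * A⁻¹ := by
          unfold stdPDF
          rw [← hs_def]
          congr 1
          rw [show -X^2/2 = -(2 * Real.log A)/2 by rw [hXsq]]
          rw [show -(2 * Real.log A)/2 = -Real.log A by ring]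
          rw [Real.exp_neg, Real.exp_log hA0]
        have hkey0 : μ * stdPDF X = σ * (1 + g) := by
          rw [hpdfX, hμA]
          field_simp
        -- goal's first branch equals μ - σ * X
        have hgoal_eq : μ - σ * Real.sqrt (2 * |Real.log A|) = μ - σ * X := by
          rw [habs, hX_def]
        rcases le_or_gt y X with hyX | hyX
        · refine le_trans ?_ (le_max_left _ _)
          rw [hgoal_eq]
          have hint2 : σ * (X - y) ≤ (μ - σ*y) * (1 - Phi y) := by
            have h1 : Phi X - Phi y = ∫ t in y..X, stdPDF t := Phi_sub
            have h2 : σ * (X - y) ≤ (μ - σ*y) * (Phi X - Phi y) := by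
              have hconst : σ * (X - y) = ∫ _t in y..X, σ := by
                rw [intervalIntegral.integral_const, smul_eq_mul]; ring
              have hmul : (μ - σ*y) * (Phi X - Phi y) = ∫ t in y..X, (μ - σ*y) * stdPDF t := by
                rw [h1, ← intervalIntegral.integral_const_mul]
              rw [hconst, hmul]
              apply intervalIntegral.integral_mono_on hyX intervalIntegrable_const
                ((continuous_const.mul continuous_stdPDF).intervalIntegrable _ _)
              intro t ht
              obtain ⟨hty, htX⟩ := ht
              have ht0 : 0 ≤ t := le_trans hy0.le hty
              have hpdf_t : stdPDF X ≤ stdPDF t := stdPDF_anti ht0 htX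
              have h5 : σ * (1 + g) ≤ μ * stdPDF t := by
                rw [← hkey0]
                exact mul_le_mul_of_nonneg_left hpdf_t hμ
              have h6 : stdPDF t * t ≤ g := gamma_ge t
              exact aux_int hσ hty (stdPDF_nonneg t) h5 h6
            have h4 : (μ - σ*y) * (Phi X - Phi y) ≤ (μ - σ*y) * (1 - Phi y) :=
              mul_le_mul_of_nonneg_left (by linarith [Phi_le_one X]) (by linarith)
            linarith
          rw [hpy]
          have hexp : (μ - σ*y) * Phi y = (μ - σ*y) - (μ - σ*y) * (1 - Phi y) := by ring
          linarith
        · refine le_trans ?_ (le_max_left _ _)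
          rw [hgoal_eq, hpy]
          have h7 : (μ - σ*y) * Phi y ≤ (μ - σ*y) * 1 :=
            mul_le_mul_of_nonneg_left (Phi_le_one y) (by linarith)
          have h8 : σ * X ≤ σ * y := mul_le_mul_of_nonneg_left hyX.le hσ.le
          linarith
end

section
/- Let T = [τ_l, τ_h] ⊂ R be a compact interval, let β_{l_1} ≤ ... ≤ β_{l_{k+1}} be real numbers, and let (I_1, ..., I_k) be an interval partition of T. Define M(I_1,...,I_k) as the set of nondecreasing functions h : T → [β_{l_1}, β_{l_{k+1}}] with h(I_i) ⊆ [β_{l_i}, β_{l_{i+1}}] for each i, endowed with the L¹ metric. Then M(I_1,...,I_k) is convex and compact (sequentially compact in L¹). -/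
open MeasureTheory Filter Topology

/-- The set of nondecreasing functions on `[τl, τh]` with values in `[β 0, β k]`
and respecting the interval constraints `h (I i) ⊆ [β i, β (i+1)]`. -/
def Mset (τl τh : ℝ) (k : ℕ) (β : Fin (k + 1) → ℝ) (I : Fin k → Set ℝ) : Set (ℝ → ℝ) :=
  {h : ℝ → ℝ |
    MonotoneOn h (Set.Icc τl τh) ∧
    (∀ τ ∈ Set.Icc τl τh, h τ ∈ Set.Icc (β 0) (β (Fin.last k))) ∧
    ∀ i : Fin k, ∀ τ ∈ I i, h τ ∈ Set.Icc (β i.castSucc) (β i.succ)}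

theorem stmt13 (τl τh : ℝ) (hτ : τl ≤ τh) (k : ℕ) (β : Fin (k + 1) → ℝ) (hβ : Monotone β)
    (I : Fin k → Set ℝ) (hIord : ∀ i, (I i).OrdConnected)
    (hIsub : ∀ i, I i ⊆ Set.Icc τl τh)
    (hcover : (⋃ i, I i) = Set.Icc τl τh)
    (hdisj : Pairwise (Function.onFun Disjoint I)) :
    Convex ℝ (Mset τl τh k β I)
    ∧ ∀ h : ℕ → ℝ → ℝ, (∀ n, h n ∈ Mset τl τh k β I) →
        ∃ g ∈ Mset τl τh k β I, ∃ φ : ℕ → ℕ, StrictMono φ ∧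
          Tendsto (fun n => ∫ τ in Set.Icc τl τh, |h (φ n) τ - g τ|) atTop (nhds 0) := by
  constructor
  · -- Convexity
    rintro f hf g' hg' a b ha hb hab
    refine ⟨?_, ?_, ?_⟩
    · intro x hx y hy hxy
      have h1 := hf.1 hx hy hxy
      have h2 := hg'.1 hx hy hxy
      simp only [Pi.add_apply, Pi.smul_apply, smul_eq_mul]
      exact add_le_add (mul_le_mul_of_nonneg_left h1 ha) (mul_le_mul_of_nonneg_left h2 hb)
    · intro τ hτ'
      have := (convex_Icc (β 0) (β (Fin.last k))) (hf.2.1 τ hτ') (hg'.2.1 τ hτ') ha hb hab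
      simpa using this
    · intro i τ hτ'
      have := (convex_Icc (β i.castSucc) (β i.succ)) (hf.2.2 i τ hτ') (hg'.2.2 i τ hτ') ha hb hab
      simpa using this
  · -- Compactness
    intro h hmem
    classical
    have hmono : ∀ n, MonotoneOn (h n) (Set.Icc τl τh) := fun n => (hmem n).1
    have hbdd : ∀ n, ∀ τ ∈ Set.Icc τl τh, h n τ ∈ Set.Icc (β 0) (β (Fin.last k)) :=
      fun n => (hmem n).2.1
    have hctr : ∀ n, ∀ i : Fin k, ∀ τ ∈ I i, h n τ ∈ Set.Icc (β i.castSucc) (β i.succ) :=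
      fun n => (hmem n).2.2
    set B0 := β 0 with hB0
    set B1 := β (Fin.last k) with hB1
    -- the countable set D
    set D : Set ℝ := Set.Icc τl τh ∩
        (({τl, τh} ∪ Set.range ((↑) : ℚ → ℝ)) ∪ Set.range (fun i : Fin k => sInf (I i)))
      with hDdef
    have hDsub : D ⊆ Set.Icc τl τh := Set.inter_subset_left
    have hDcount : D.Countable := by
      refine Set.Countable.mono Set.inter_subset_right ?_
      exact (((Set.countable_singleton τh).insert τl).union
        (Set.countable_range ((↑) : ℚ → ℝ))).union
        (Set.countable_range (fun i : Fin k => sInf (I i)))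
    have hτlD : τl ∈ D := ⟨Set.left_mem_Icc.2 hτ, Or.inl (Or.inl (by simp))⟩
    have hτhD : τh ∈ D := ⟨Set.right_mem_Icc.2 hτ, Or.inl (Or.inl (by simp))⟩
    have hQD : ∀ q : ℚ, (q : ℝ) ∈ Set.Icc τl τh → (q : ℝ) ∈ D :=
      fun q hq => ⟨hq, Or.inl (Or.inr ⟨q, rfl⟩)⟩
    obtain ⟨e, he⟩ := hDcount.exists_eq_range ⟨τl, hτlD⟩
    have heD : ∀ n, e n ∈ D := fun n => he ▸ Set.mem_range_self n
    have hB01 : B0 ≤ B1 := hβ (Fin.zero_le _)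
    -- extraction of a subsequence converging on D
    haveI : CompactSpace (Set.Icc B0 B1) := isCompact_iff_compactSpace.mp isCompact_Icc
    set F : ℕ → (ℕ → Set.Icc B0 B1) :=
      fun m n => ⟨h m (e n), hbdd m (e n) (hDsub (heD n))⟩ with hF
    obtain ⟨l, -, φ, hφ, hconv⟩ := isCompact_univ.tendsto_subseq (x := F)
      (fun m => Set.mem_univ _)
    have hcoord : ∀ n, Tendsto (fun m => h (φ m) (e n)) atTop (𝓝 ((l n : ℝ))) := by
      intro n
      have h1 := tendsto_pi_nhds.1 hconv n
      exact (continuous_subtype_val.tendsto (l n)).comp h1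
    -- the limit function on D
    set L : ℝ → ℝ := fun x => if hx : ∃ n, e n = x then ((l hx.choose : ℝ)) else 0 with hLdef
    have hL : ∀ d ∈ D, Tendsto (fun m => h (φ m) d) atTop (𝓝 (L d)) := by
      intro d hd
      rw [he] at hd
      have hx : ∃ n, e n = d := hd
      have := hcoord hx.choose
      rw [hx.choose_spec] at this
      simpa only [hLdef, dif_pos hx] using this
    have hLmem : ∀ d ∈ D, L d ∈ Set.Icc B0 B1 := fun d hd =>
      isClosed_Icc.mem_of_tendsto (hL d hd)
        (Eventually.of_forall fun m => hbdd (φ m) d (hDsub hd))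
    have hLmono : ∀ d ∈ D, ∀ d' ∈ D, d ≤ d' → L d ≤ L d' := fun d hd d' hd' hdd' =>
      le_of_tendsto_of_tendsto' (hL d hd) (hL d' hd')
        (fun m => hmono (φ m) (hDsub hd) (hDsub hd') hdd')
    -- the candidate limit g
    set g : ℝ → ℝ := fun τ => sSup (L '' (D ∩ Set.Iic (max τl (min τ τh)))) with hgdef
    have hclamp : ∀ τ ∈ Set.Icc τl τh, max τl (min τ τh) = τ := by
      intro τ hτ'
      rw [min_eq_left hτ'.2, max_eq_right hτ'.1]
    have hsetne : ∀ c : ℝ, τl ≤ c → (L '' (D ∩ Set.Iic c)).Nonempty :=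
      fun c hc => ⟨L τl, ⟨τl, ⟨hτlD, hc⟩, rfl⟩⟩
    have hsetbdd : ∀ c : ℝ, BddAbove (L '' (D ∩ Set.Iic c)) := by
      intro c
      refine ⟨B1, ?_⟩
      rintro x ⟨d, ⟨hd, -⟩, rfl⟩
      exact (hLmem d hd).2
    have hgmono : Monotone g := by
      intro x y hxy
      refine csSup_le_csSup (hsetbdd _) (hsetne _ (le_max_left _ _)) ?_
      refine Set.image_mono (Set.inter_subset_inter_right _ ?_)
      exact Set.Iic_subset_Iic.2 (max_le_max le_rfl (min_le_min hxy le_rfl))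
    have hgS : ∀ τ ∈ Set.Icc τl τh, g τ = sSup (L '' (D ∩ Set.Iic τ)) := by
      intro τ hτ'
      rw [hgdef]
      simp only [hclamp τ hτ']
    have hgD : ∀ τ ∈ D, g τ = L τ := by
      intro τ hτ'
      rw [hgS τ (hDsub hτ')]
      refine le_antisymm ?_ ?_
      · refine csSup_le (hsetne _ (hDsub hτ').1) ?_
        rintro x ⟨d, ⟨hd, hdτ⟩, rfl⟩
        exact hLmono d hd τ hτ' hdτ
      · exact le_csSup (hsetbdd _) ⟨τ, ⟨hτ', le_refl τ⟩, rfl⟩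
    have hgmem : ∀ τ ∈ Set.Icc τl τh, g τ ∈ Set.Icc B0 B1 := by
      intro τ hτ'
      rw [hgS τ hτ']
      constructor
      · exact le_trans (hLmem τl hτlD).1 (le_csSup (hsetbdd _) ⟨τl, ⟨hτlD, hτ'.1⟩, rfl⟩)
      · refine csSup_le (hsetne _ hτ'.1) ?_
        rintro x ⟨d, ⟨hd, -⟩, rfl⟩
        exact (hLmem d hd).2
    -- pointwise convergence at points of D and continuity points of g
    have hconv_pt : ∀ τ ∈ Set.Icc τl τh, (τ ∈ D ∨ ContinuousAt g τ) →
        Tendsto (fun m => h (φ m) τ) atTop (𝓝 (g τ)) := by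
      intro τ hτS hcase
      rw [tendsto_order]
      constructor
      · intro a ha
        rw [hgS τ hτS] at ha
        obtain ⟨x, hx, hax⟩ := exists_lt_of_lt_csSup (hsetne _ hτS.1) ha
        obtain ⟨d, ⟨hdD, hdτ⟩, rfl⟩ := hx
        filter_upwards [(hL d hdD).eventually_const_lt hax] with m hm
        exact hm.trans_le (hmono (φ m) (hDsub hdD) hτS hdτ)
      · intro a ha
        obtain ⟨d, hdD, hτd, hLd⟩ : ∃ d ∈ D, τ ≤ d ∧ L d < a := by
          by_cases hτD : τ ∈ D
          · exact ⟨τ, hτD, le_refl τ, by rwa [← hgD τ hτD]⟩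
          · have hcont := hcase.resolve_left hτD
            have hτh' : τ < τh := lt_of_le_of_ne hτS.2 (by rintro rfl; exact hτD hτhD)
            have hev : ∀ᶠ x in 𝓝 τ, g x < a := hcont.eventually_lt_const ha
            obtain ⟨ε, hε, hball⟩ := Metric.eventually_nhds_iff.1 hev
            obtain ⟨q, hq1, hq2⟩ := exists_rat_btwn (lt_min (lt_add_of_pos_right τ hε) hτh')
            have hq2a : (q : ℝ) < τ + ε := lt_of_lt_of_le hq2 (min_le_left _ _)
            have hq2b : (q : ℝ) < τh := lt_of_lt_of_le hq2 (min_le_right _ _)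
            have hqD : (q : ℝ) ∈ D := hQD q ⟨le_of_lt (lt_of_le_of_lt hτS.1 hq1), le_of_lt hq2b⟩
            have hgq : g q < a := by
              refine hball ?_
              rw [Real.dist_eq, abs_lt]
              constructor <;> linarith
            exact ⟨q, hqD, le_of_lt hq1, by rwa [hgD _ hqD] at hgq⟩
        filter_upwards [(hL d hdD).eventually_lt_const hLd] with m hm
        exact lt_of_le_of_lt (hmono (φ m) hτS (hDsub hdD) hτd) hm
    -- g belongs to Mset
    have hgMset : g ∈ Mset τl τh k β I := by
      refine ⟨hgmono.monotoneOn _, hgmem, ?_⟩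
      intro i τ hτI
      have hτS := hIsub i hτI
      constructor
      · by_cases hc : ∃ d, (d ∈ D ∩ I i) ∧ d ≤ τ
        · obtain ⟨d, ⟨hdD, hdI⟩, hdτ⟩ := hc
          have h1 : β i.castSucc ≤ L d :=
            ge_of_tendsto (hL d hdD) (Eventually.of_forall fun m => (hctr (φ m) i d hdI).1)
          refine le_trans h1 ?_
          rw [hgS τ hτS]
          exact le_csSup (hsetbdd _) ⟨d, ⟨hdD, hdτ⟩, rfl⟩
        · exfalso
          have hbb : BddBelow (I i) := ⟨τl, fun x hx => (hIsub i hx).1⟩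
          have h1 : sInf (I i) = τ := by
            refine le_antisymm (csInf_le hbb hτI) ?_
            by_contra hlt
            push_neg at hlt
            obtain ⟨x, hxI, hxτ⟩ := exists_lt_of_csInf_lt ⟨τ, hτI⟩ hlt
            obtain ⟨q, hq1, hq2⟩ := exists_rat_btwn hxτ
            have hqI : (q : ℝ) ∈ I i :=
              (hIord i).out hxI hτI ⟨le_of_lt hq1, le_of_lt hq2⟩
            exact hc ⟨q, ⟨hQD q (hIsub i hqI), hqI⟩, le_of_lt hq2⟩
          have hτD : τ ∈ D := ⟨hτS, Or.inr ⟨i, h1⟩⟩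
          exact hc ⟨τ, ⟨hτD, hτI⟩, le_refl τ⟩
      · rw [hgS τ hτS]
        refine csSup_le (hsetne _ hτS.1) ?_
        rintro x ⟨d, ⟨hdD, hdτ⟩, rfl⟩
        refine le_of_tendsto (hL d hdD) (Eventually.of_forall fun m => ?_)
        exact (hmono (φ m) (hDsub hdD) hτS hdτ).trans (hctr (φ m) i τ hτI).2
    -- L¹ convergence via dominated convergence
    refine ⟨g, hgMset, φ, hφ, ?_⟩
    set N : Set ℝ := {x | ¬ContinuousAt g x} \ D with hNdef
    have hNc : N.Countable := hgmono.countable_not_continuousAt.mono Set.diff_subset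
    have hae1 : ∀ᵐ τ ∂(volume.restrict (Set.Icc τl τh)), τ ∉ N := by
      refine ae_restrict_of_ae ?_
      have : volume N = 0 := hNc.measure_zero volume
      exact measure_eq_zero_iff_ae_notMem.1 this
    have hae2 : ∀ᵐ τ ∂(volume.restrict (Set.Icc τl τh)), τ ∈ Set.Icc τl τh :=
      ae_restrict_mem measurableSet_Icc
    have htend_ae : ∀ᵐ τ ∂(volume.restrict (Set.Icc τl τh)),
        Tendsto (fun m => |h (φ m) τ - g τ|) atTop (𝓝 0) := by
      filter_upwards [hae1, hae2] with τ hτN hτS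
      have hcase : τ ∈ D ∨ ContinuousAt g τ := by
        by_cases hd : τ ∈ D
        · exact Or.inl hd
        · right
          by_contra hcc
          exact hτN ⟨hcc, hd⟩
      have ht := hconv_pt τ hτS hcase
      have h2 : Tendsto (fun m => h (φ m) τ - g τ) atTop (𝓝 (g τ - g τ)) :=
        ht.sub (tendsto_const_nhds (x := g τ))
      have h3 := h2.abs
      simpa using h3
    have hmeas : ∀ m, AEStronglyMeasurable (fun τ => |h (φ m) τ - g τ|)
        (volume.restrict (Set.Icc τl τh)) := by
      intro m
      have h1 : AEStronglyMeasurable (fun τ => h (φ m) τ - g τ)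
          (volume.restrict (Set.Icc τl τh)) :=
        ((aemeasurable_restrict_of_monotoneOn measurableSet_Icc (hmono (φ m))).sub
          hgmono.measurable.aemeasurable).aestronglyMeasurable
      simpa [Real.norm_eq_abs] using h1.norm
    have hbound_int : Integrable (fun _ : ℝ => B1 - B0) (volume.restrict (Set.Icc τl τh)) :=
      integrableOn_const measure_Icc_lt_top.ne
    have h_bound : ∀ m, ∀ᵐ τ ∂(volume.restrict (Set.Icc τl τh)),
        ‖|h (φ m) τ - g τ|‖ ≤ B1 - B0 := by
      intro m
      filter_upwards [hae2] with τ hτS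
      have h1 := hbdd (φ m) τ hτS
      have h2 := hgmem τ hτS
      rw [Real.norm_eq_abs, abs_abs, abs_le]
      constructor <;> [linarith [h1.1, h2.2]; linarith [h1.2, h2.1]]
    have := tendsto_integral_of_dominated_convergence (μ := volume.restrict (Set.Icc τl τh))
      (F := fun m τ => |h (φ m) τ - g τ|) (f := fun _ => (0 : ℝ))
      (fun _ : ℝ => B1 - B0) hmeas hbound_int h_bound htend_ae
    simpa using this
end

section
/- Consider the one-dimensional screening environment: type space T ⊆ R an interval containing 0, allocation set {1,...,m}, type-τ utility from lottery q ∈ Δ({1,...,m}) at transfer t given by α(τ)·q − t where α(τ) = α(0) + τβ for fixed vectors α(0), β ∈ R^m. Let V ∈ V (i.e., V : T → R convex, V ≥ 0, ∂V(τ) ⊆ [min β, max β]). Define H(x) := max{α(0)·q : q ∈ Δ, β·q = x}. Then for any IC-IR mechanism (q, t) inducing indirect utility V, the expected transfer satisfies E[t(τ)] ≤ E[H(∂V(τ)) + τ·∂V(τ) − V(τ)], and this bound is attained by any mechanism with q(τ) ∈ argmax{α(0)·q : β·q ∈ ∂V(τ)} and t(τ) = α(τ)·q(τ) − V(τ), which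 is itself IC and IR. -/
open MeasureTheory Matrix

/-- `H x` is the maximal base utility `α0 · q` over lotteries `q` in the simplex
with slope `β · q = x`. -/
noncomputable def Hfun (m : ℕ) (α0 β : Fin m → ℝ) (x : ℝ) : ℝ :=
  sSup {y : ℝ | ∃ q ∈ stdSimplex ℝ (Fin m), β ⬝ᵥ q = x ∧ α0 ⬝ᵥ q = y}

/-- The subdifferential of `V` at `τ`, relative to the type space `T`. -/
def subdiff (T : Set ℝ) (V : ℝ → ℝ) (τ : ℝ) : Set ℝ :=
  {l : ℝ | ∀ τ' ∈ T, V τ + l * (τ' - τ) ≤ V τ'}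


lemma dot_le_isup (m : ℕ) [NeZero m] (α0 q : Fin m → ℝ) (hq : q ∈ stdSimplex ℝ (Fin m)) :
    α0 ⬝ᵥ q ≤ ⨆ j, α0 j := by
  have h1 : ∀ j, α0 j ≤ ⨆ j, α0 j := fun j =>
    le_ciSup (Set.Finite.bddAbove (Set.finite_range α0)) j
  calc α0 ⬝ᵥ q = ∑ j, α0 j * q j := rfl
    _ ≤ ∑ j, (⨆ j, α0 j) * q j := by
        apply Finset.sum_le_sum
        intro j _
        exact mul_le_mul_of_nonneg_right (h1 j) (hq.1 j)
    _ = ⨆ j, α0 j := by rw [← Finset.mul_sum, hq.2, mul_one]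

lemma le_Hfun (m : ℕ) [NeZero m] (α0 β q : Fin m → ℝ) (hq : q ∈ stdSimplex ℝ (Fin m)) :
    α0 ⬝ᵥ q ≤ Hfun m α0 β (β ⬝ᵥ q) := by
  apply le_csSup
  · exact ⟨⨆ j, α0 j, fun y ⟨p, hp, _, hy⟩ => hy ▸ dot_le_isup m α0 p hp⟩
  · exact ⟨q, hq, rfl, rfl⟩

lemma dot_expand (m : ℕ) (α0 β q : Fin m → ℝ) (τ : ℝ) :
    (α0 + τ • β) ⬝ᵥ q = α0 ⬝ᵥ q + τ * (β ⬝ᵥ q) := by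
  rw [add_dotProduct, smul_dotProduct, smul_eq_mul]

theorem stmt16 (m : ℕ) [NeZero m] (α0 β : Fin m → ℝ)
    (T : Set ℝ) (hT : Convex ℝ T) (h0T : (0 : ℝ) ∈ T)
    (μ : Measure ℝ) [IsProbabilityMeasure μ] (hμT : μ T = 1)
    (V : ℝ → ℝ) (hVconv : ConvexOn ℝ T V) (hVnonneg : ∀ τ ∈ T, 0 ≤ V τ)
    (hVsub : ∀ τ ∈ T, subdiff T V τ ⊆ Set.Icc (⨅ j, β j) (⨆ j, β j)) :
    -- any IC-IR mechanism inducing indirect utility V yields expected transfer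
    -- at most E[H(∂V(τ)) + τ ∂V(τ) − V(τ)]
    (∀ q : ℝ → Fin m → ℝ, ∀ t : ℝ → ℝ,
      (∀ τ ∈ T, q τ ∈ stdSimplex ℝ (Fin m)) →
      (∀ τ ∈ T, ∀ τ' ∈ T,
        (α0 + τ • β) ⬝ᵥ q τ' - t τ' ≤ (α0 + τ • β) ⬝ᵥ q τ - t τ) →
      (∀ τ ∈ T, 0 ≤ (α0 + τ • β) ⬝ᵥ q τ - t τ) →
      (∀ τ ∈ T, (α0 + τ • β) ⬝ᵥ q τ - t τ = V τ) →
      Integrable t μ →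
      Integrable (fun τ => Hfun m α0 β (β ⬝ᵥ q τ) + τ * (β ⬝ᵥ q τ) - V τ) μ →
      ∫ τ, t τ ∂μ ≤ ∫ τ, (Hfun m α0 β (β ⬝ᵥ q τ) + τ * (β ⬝ᵥ q τ) - V τ) ∂μ)
    -- and any mechanism constructed from pointwise maximizers over the
    -- subdifferential attains this bound, and is IC and IR
    ∧ (∀ q : ℝ → Fin m → ℝ, ∀ t : ℝ → ℝ,
      (∀ τ ∈ T, q τ ∈ stdSimplex ℝ (Fin m) ∧ β ⬝ᵥ q τ ∈ subdiff T V τ ∧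
        α0 ⬝ᵥ q τ = Hfun m α0 β (β ⬝ᵥ q τ)) →
      (∀ τ ∈ T, t τ = (α0 + τ • β) ⬝ᵥ q τ - V τ) →
      ((∀ τ ∈ T, ∀ τ' ∈ T,
          (α0 + τ • β) ⬝ᵥ q τ' - t τ' ≤ (α0 + τ • β) ⬝ᵥ q τ - t τ)
        ∧ (∀ τ ∈ T, 0 ≤ (α0 + τ • β) ⬝ᵥ q τ - t τ)
        ∧ ∀ τ ∈ T, t τ = Hfun m α0 β (β ⬝ᵥ q τ) + τ * (β ⬝ᵥ q τ) - V τ)) := by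
  constructor
  · intro q t hqs hIC hIR hV hint1 hint2
    have hTm : MeasurableSet T := hT.ordConnected.measurableSet
    have hTc : μ Tᶜ = 0 := by
      rw [measure_compl hTm (by simp), hμT, measure_univ, tsub_self]
    apply integral_mono_ae hint1 hint2
    have hsub : {τ | ¬ t τ ≤ Hfun m α0 β (β ⬝ᵥ q τ) + τ * (β ⬝ᵥ q τ) - V τ} ⊆ Tᶜ := by
      intro τ hτ hτT
      apply hτ
      have hVt := hV τ hτT
      rw [dot_expand] at hVt
      have := le_Hfun m α0 β (q τ) (hqs τ hτT)
      linarith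
    have hae : ∀ᵐ τ ∂μ, t τ ≤ Hfun m α0 β (β ⬝ᵥ q τ) + τ * (β ⬝ᵥ q τ) - V τ := by
      rw [ae_iff]
      exact measure_mono_null hsub hTc
    exact hae
  · intro q t hq ht
    refine ⟨?_, ?_, ?_⟩
    · intro τ hτ τ' hτ'
      obtain ⟨_, hsd, _⟩ := hq τ' hτ'
      have h1 := hsd τ hτ
      rw [ht τ hτ, ht τ' hτ', dot_expand, dot_expand]
      ring_nf
      nlinarith [h1]
    · intro τ hτ
      rw [ht τ hτ]
      have := hVnonneg τ hτ
      linarith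
    · intro τ hτ
      rw [ht τ hτ, dot_expand, (hq τ hτ).2.2]
end

section
/- Fix θ* > 0 and let F be a continuously differentiable cdf on R with positive density satisfying the left-tail condition F(−z) = exp(−αz^β + o(z^β)) as z → ∞ for some α, β > 0. Let F_n(x) := F((x − θ*)√n). If a price sequence (p_n) satisfies θ* − p_n ~ δ·(ln n/(2α))^{1/β}·n^{−1/2} for some δ ≥ 0, then F_n(p_n) = n^{−δ^β/2 + o(1)}; consequently θ*F_n(p_n)/((ln n)^{1/β} n^{−1/2}) tends to 0 if δ > 1 and to ∞ if δ < 1. -/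
open Filter

theorem stmt18 (θ : ℝ) (hθ : 0 < θ) (F f : ℝ → ℝ)
    (hF : ∀ x, HasDerivAt F (f x) x) (hfpos : ∀ x, 0 < f x) (hfcont : Continuous f)
    (hF0 : Tendsto F atBot (nhds 0)) (hF1 : Tendsto F atTop (nhds 1))
    (α β : ℝ) (hα : 0 < α) (hβ : 0 < β)
    (htail : Tendsto (fun z : ℝ => Real.log (F (-z)) / z ^ β) atTop (nhds (-α)))
    (δ : ℝ) (hδ : 0 ≤ δ) (p : ℕ → ℝ)
    (hp : Tendsto (fun n : ℕ =>
        (θ - p n) / ((Real.log n / (2 * α)) ^ ((1 : ℝ) / β) * (n : ℝ) ^ (-(1 : ℝ) / 2)))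
      atTop (nhds δ)) :
    Tendsto (fun n : ℕ => Real.log (F ((p n - θ) * Real.sqrt n)) / Real.log n)
      atTop (nhds (-(δ ^ β) / 2))
    ∧ (1 < δ → Tendsto (fun n : ℕ =>
        θ * F ((p n - θ) * Real.sqrt n)
          / ((Real.log n) ^ ((1 : ℝ) / β) * (n : ℝ) ^ (-(1 : ℝ) / 2)))
        atTop (nhds 0))
    ∧ (δ < 1 → Tendsto (fun n : ℕ =>
        θ * F ((p n - θ) * Real.sqrt n)
          / ((Real.log n) ^ ((1 : ℝ) / β) * (n : ℝ) ^ (-(1 : ℝ) / 2)))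
        atTop atTop) := by
  have hβ' : β ≠ 0 := hβ.ne'
  have hα2 : (0:ℝ) < 2 * α := by linarith
  -- F is strictly monotone, positive, and ≤ 1
  have hmono : StrictMono F :=
    strictMono_of_deriv_pos (fun x => by rw [(hF x).deriv]; exact hfpos x)
  have hFnonneg : ∀ x, 0 ≤ F x := by
    intro x
    refine le_of_tendsto hF0 ?_
    filter_upwards [eventually_le_atBot x] with y hy
    exact hmono.monotone hy
  have hFpos : ∀ x, 0 < F x := fun x =>
    lt_of_le_of_lt (hFnonneg (x - 1)) (hmono (by linarith))
  have hFle1 : ∀ x, F x ≤ 1 := by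
    intro x
    refine ge_of_tendsto hF1 ?_
    filter_upwards [eventually_ge_atTop x] with y hy
    exact hmono.monotone hy
  -- basic limits
  have hlog : Tendsto (fun n : ℕ => Real.log n) atTop atTop :=
    Real.tendsto_log_atTop.comp tendsto_natCast_atTop_atTop
  set q : ℕ → ℝ := fun n => (Real.log n / (2 * α)) ^ ((1:ℝ)/β) with hq_def
  set z : ℕ → ℝ := fun n => (θ - p n) * Real.sqrt n with hz_def
  have hwz : ∀ n : ℕ, (p n - θ) * Real.sqrt n = -(z n) := fun n => by
    simp only [hz_def]; ring
  have hqT : Tendsto q atTop atTop :=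
    (tendsto_rpow_atTop (by positivity : (0:ℝ) < 1/β)).comp
      (hlog.atTop_div_const hα2)
  have hbase : ∀ᶠ n : ℕ in atTop, 0 < Real.log n ∧ 0 < q n ∧ (1:ℝ) ≤ (n:ℝ) ∧ 2 ≤ n := by
    filter_upwards [eventually_ge_atTop 2] with n hn
    have h1 : (2:ℝ) ≤ (n:ℝ) := by exact_mod_cast hn
    have hlogpos : 0 < Real.log n := Real.log_pos (by linarith)
    exact ⟨hlogpos, Real.rpow_pos_of_pos (by positivity) _, by linarith, hn⟩
  -- the normalized ratio tends to δ
  have hzq : Tendsto (fun n => z n / q n) atTop (nhds δ) := by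
    refine hp.congr' ?_
    filter_upwards [hbase] with n ⟨hlogpos, hqpos, h1n, _⟩
    have hsq : (0:ℝ) < Real.sqrt n := Real.sqrt_pos.2 (by linarith)
    have hrw : (n:ℝ) ^ (-(1:ℝ)/2) = (Real.sqrt n)⁻¹ := by
      rw [show (-(1:ℝ)/2) = -(1/2) by ring, Real.rpow_neg (by linarith),
        ← Real.sqrt_eq_rpow]
    rw [hrw]
    field_simp
    simp only [hz_def, hq_def]; ring
  -- q n ^ β = log n / (2α)
  have hqβ : ∀ n : ℕ, 0 < Real.log n → q n ^ β = Real.log n / (2 * α) := by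
    intro n hlogpos
    rw [hq_def, ← Real.rpow_mul (by positivity), one_div_mul_cancel hβ', Real.rpow_one]
  -- Part 1
  have hmain : Tendsto (fun n : ℕ => Real.log (F ((p n - θ) * Real.sqrt n)) / Real.log n)
      atTop (nhds (-(δ ^ β) / 2)) := by
    rcases eq_or_lt_of_le hδ with hδ0 | hδpos
    · -- δ = 0
      rw [show -(δ ^ β)/2 = 0 by rw [← hδ0, Real.zero_rpow hβ']; ring]
      rw [Metric.tendsto_atTop]
      intro ε hε
      obtain ⟨M₀, hM₀⟩ := (Metric.tendsto_atTop.mp htail) α hα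
      set M : ℝ := max M₀ 1 with hM_def
      have hMlb : ∀ zz : ℝ, M ≤ zz → -(2*α) * zz ^ β ≤ Real.log (F (-zz)) := by
        intro zz hzz
        have h1 := hM₀ zz (le_trans (le_max_left _ _) hzz)
        have hzz1 : (1:ℝ) ≤ zz := le_trans (le_max_right _ _) hzz
        have hzb : 0 < zz ^ β := Real.rpow_pos_of_pos (by linarith) β
        rw [Real.dist_eq] at h1
        have h2 := (abs_lt.mp h1).1
        have h3 : -(2*α) < Real.log (F (-zz)) / zz ^ β := by linarith
        calc -(2*α) * zz ^ β ≤ (Real.log (F (-zz)) / zz ^ β) * zz ^ β :=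
              (mul_le_mul_of_nonneg_right h3.le hzb.le)
          _ = Real.log (F (-zz)) := div_mul_cancel₀ _ hzb.ne'
      set ε' : ℝ := (ε/2) ^ ((1:ℝ)/β) with hε'_def
      have hε' : 0 < ε' := Real.rpow_pos_of_pos (by linarith) _
      have hε'β : ε' ^ β = ε/2 := by
        rw [hε'_def, ← Real.rpow_mul (by linarith), one_div_mul_cancel hβ', Real.rpow_one]
      obtain ⟨N1, hN1⟩ := Metric.tendsto_atTop.mp hzq ε' hε'
      obtain ⟨N2, hN2⟩ := eventually_atTop.mp
        (hlog.eventually_ge_atTop ((2/ε) * |Real.log (F (-M))| + 1))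
      obtain ⟨N3, hN3⟩ := eventually_atTop.mp hbase
      refine ⟨max (max N1 N2) N3, fun n hn => ?_⟩
      obtain ⟨hlogpos, hqpos, h1n, _⟩ := hN3 n (le_trans (le_max_right _ _) hn)
      have hzn : |z n / q n| < ε' := by
        have := hN1 n (le_trans (le_trans (le_max_left _ _) (le_max_left _ _)) hn)
        rwa [Real.dist_eq, ← hδ0, sub_zero] at this
      have hlogN : (2/ε) * |Real.log (F (-M))| + 1 ≤ Real.log n :=
        hN2 n (le_trans (le_trans (le_max_right _ _) (le_max_left _ _)) hn)
      rw [Real.dist_eq, sub_zero, hwz n]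
      have hLle : Real.log (F (-(z n))) ≤ 0 := Real.log_nonpos (hFnonneg _) (hFle1 _)
      have key : -(ε/2) * Real.log n ≤ Real.log (F (-(z n))) := by
        rcases le_or_gt (z n) M with hcase | hcase
        · have hmon : F (-M) ≤ F (-(z n)) := hmono.monotone (by linarith)
          have hll : Real.log (F (-M)) ≤ Real.log (F (-(z n))) := by
            gcongr
            exact hFpos _
          have habs : -|Real.log (F (-M))| ≤ Real.log (F (-M)) := neg_abs_le _
          have hA : |Real.log (F (-M))| ≤ (ε/2) * Real.log n := by
            have e1 : (2/ε) * |Real.log (F (-M))| ≤ Real.log n := by linarith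
            have e2 : |Real.log (F (-M))| = (ε/2) * ((2/ε) * |Real.log (F (-M))|) := by
              field_simp
            rw [e2]
            exact mul_le_mul_of_nonneg_left e1 (by linarith)
          linarith
        · have hM1 : (1:ℝ) ≤ M := le_max_right _ _
          have hznpos : 0 < z n := by linarith
          have h1 := hMlb (z n) hcase.le
          have hzle : z n ≤ ε' * q n := by
            have h2 := (abs_lt.mp hzn).2
            calc z n = (z n / q n) * q n := by field_simp
              _ ≤ ε' * q n := mul_le_mul_of_nonneg_right h2.le hqpos.le
          have hzβ : z n ^ β ≤ (ε/2) * (Real.log n / (2*α)) := by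
            calc z n ^ β ≤ (ε' * q n) ^ β := Real.rpow_le_rpow hznpos.le hzle hβ.le
              _ = ε' ^ β * q n ^ β := Real.mul_rpow hε'.le hqpos.le
              _ = (ε/2) * (Real.log n / (2*α)) := by rw [hε'β, hqβ n hlogpos]
          have hval : -(2*α) * ((ε/2) * (Real.log n / (2*α))) = -(ε/2) * Real.log n := by
            field_simp
          calc -(ε/2) * Real.log n = -(2*α) * ((ε/2) * (Real.log n / (2*α))) := hval.symm
            _ ≤ -(2*α) * (z n ^ β) := by nlinarith
            _ ≤ Real.log (F (-(z n))) := h1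
      have hup : Real.log (F (-(z n))) / Real.log n ≤ 0 :=
        div_nonpos_iff.mpr (Or.inr ⟨hLle, hlogpos.le⟩)
      have hlo : -(ε/2) ≤ Real.log (F (-(z n))) / Real.log n := by
        rw [le_div_iff₀ hlogpos]
        exact key
      rw [abs_lt]
      constructor <;> linarith
    · -- 0 < δ
      have hzT : Tendsto z atTop atTop := by
        refine Tendsto.congr' ?_ (hzq.pos_mul_atTop hδpos hqT)
        filter_upwards [hbase] with n ⟨_, hqpos, _, _⟩
        exact div_mul_cancel₀ _ hqpos.ne'
      have h1 : Tendsto (fun n : ℕ => Real.log (F (-(z n))) / z n ^ β) atTop (nhds (-α)) :=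
        htail.comp hzT
      have hzpos : ∀ᶠ n : ℕ in atTop, 0 < z n := hzT.eventually_gt_atTop 0
      have h2 : Tendsto (fun n : ℕ => z n ^ β / Real.log n) atTop (nhds (δ ^ β / (2*α))) := by
        have h3 : Tendsto (fun n : ℕ => (z n / q n) ^ β / (2*α)) atTop (nhds (δ^β/(2*α))) :=
          (hzq.rpow_const (Or.inr hβ.le)).div_const _
        refine h3.congr' ?_
        filter_upwards [hbase, hzpos] with n ⟨hlogpos, hqpos, _, _⟩ hzn
        rw [Real.div_rpow hzn.le hqpos.le, hqβ n hlogpos]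
        rw [div_div_eq_mul_div, div_div, mul_comm (Real.log n) (2*α), ← div_div,
          mul_div_assoc, div_self hα2.ne', mul_one]
      have hprod := h1.mul h2
      rw [show -α * (δ^β/(2*α)) = -(δ^β)/2 by field_simp] at hprod
      refine Tendsto.congr' ?_ hprod
      filter_upwards [hbase, hzpos] with n ⟨hlogpos, _, _, _⟩ hzn
      rw [hwz n]
      have hzβ : z n ^ β ≠ 0 := (Real.rpow_pos_of_pos hzn β).ne'
      field_simp
  -- the quantity in parts 2 and 3
  set g : ℕ → ℝ := fun n => θ * F ((p n - θ) * Real.sqrt n) /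
      ((Real.log n) ^ ((1:ℝ)/β) * (n:ℝ) ^ (-(1:ℝ)/2)) with hg_def
  have hgpos : ∀ᶠ n : ℕ in atTop, 0 < g n := by
    filter_upwards [hbase] with n ⟨hlogpos, _, h1n, _⟩
    have hnpos : (0:ℝ) < (n:ℝ) := by linarith
    exact div_pos (mul_pos hθ (hFpos _))
      (mul_pos (Real.rpow_pos_of_pos hlogpos _) (Real.rpow_pos_of_pos hnpos _))
  have hLdiv : Tendsto (fun n : ℕ => Real.log (g n) / Real.log n) atTop
      (nhds ((1 - δ^β)/2)) := by
    have t1 : Tendsto (fun n : ℕ => Real.log θ / Real.log n) atTop (nhds 0) :=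
      tendsto_const_nhds.div_atTop hlog
    have t3 : Tendsto (fun n : ℕ => Real.log (Real.log n) / Real.log n) atTop (nhds 0) :=
      (Real.isLittleO_log_id_atTop.tendsto_div_nhds_zero).comp hlog
    have tsum : Tendsto (fun n : ℕ => Real.log θ / Real.log n
        + Real.log (F ((p n - θ) * Real.sqrt n)) / Real.log n
        - (1/β) * (Real.log (Real.log n) / Real.log n) + 1/2) atTop
        (nhds (0 + (-(δ^β)/2) - (1/β)*0 + 1/2)) :=
      (((t1.add hmain).sub (t3.const_mul (1/β))).add tendsto_const_nhds)
    rw [show (0 + (-(δ^β)/2) - (1/β)*0 + 1/2 : ℝ) = (1-δ^β)/2 by ring] at tsum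
    refine Tendsto.congr' ?_ tsum
    filter_upwards [hbase, hgpos] with n ⟨hlogpos, _, h1n, _⟩ hgn
    have hnpos : (0:ℝ) < (n:ℝ) := by linarith
    have hFv : 0 < F ((p n - θ) * Real.sqrt n) := hFpos _
    have hden1 : (0:ℝ) < (Real.log n) ^ ((1:ℝ)/β) := Real.rpow_pos_of_pos hlogpos _
    have hden2 : (0:ℝ) < (n:ℝ) ^ (-(1:ℝ)/2) := Real.rpow_pos_of_pos hnpos _
    have hlg : Real.log (g n) = Real.log θ + Real.log (F ((p n - θ) * Real.sqrt n))
        - ((1/β) * Real.log (Real.log n) + (-(1:ℝ)/2) * Real.log n) := by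
      rw [hg_def]
      rw [Real.log_div (by positivity) (by positivity), Real.log_mul hθ.ne' hFv.ne',
        Real.log_mul hden1.ne' hden2.ne', Real.log_rpow hlogpos, Real.log_rpow hnpos]
    rw [hlg]
    field_simp
    ring
  refine ⟨hmain, ?_, ?_⟩
  · intro h1δ
    have hδβ : 1 < δ ^ β :=
      (Real.one_lt_rpow_iff_of_pos (by linarith)).mpr (Or.inl ⟨h1δ, hβ⟩)
    have hc : (1 - δ^β)/2 < 0 := by linarith
    have hLbot : Tendsto (fun n : ℕ => Real.log (g n)) atTop atBot := by
      refine Tendsto.congr' ?_ (hLdiv.neg_mul_atTop hc hlog)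
      filter_upwards [hbase] with n ⟨hlogpos, _, _, _⟩
      exact div_mul_cancel₀ _ hlogpos.ne'
    refine Tendsto.congr' ?_ (Real.tendsto_exp_atBot.comp hLbot)
    filter_upwards [hgpos] with n hgn
    exact Real.exp_log hgn
  · intro hδ1
    have hδβ : δ ^ β < 1 := Real.rpow_lt_one hδ hδ1 hβ
    have hc : 0 < (1 - δ^β)/2 := by linarith
    have hLtop : Tendsto (fun n : ℕ => Real.log (g n)) atTop atTop := by
      refine Tendsto.congr' ?_ (hLdiv.pos_mul_atTop hc hlog)
      filter_upwards [hbase] with n ⟨hlogpos, _, _, _⟩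
      exact div_mul_cancel₀ _ hlogpos.ne'
    refine Tendsto.congr' ?_ (Real.tendsto_exp_atTop.comp hLtop)
    filter_upwards [hgpos] with n hgn
    exact Real.exp_log hgn
end
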